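/- If φ solves the Klein–Gordon equation (iℏD_α)(iℏD^α)φ = m₀²c²φ, then Re{φ*(iℏD_μ)(iℏD^μ)φ}/(φ*φ) = c²m₀², and hence V*_μV^μ − c² = (ℏ²/2m₀²)∂_μ∂^μ(φφ*)/(φ*φ). -/

import Mathlib

/-!
Write `φ = exp((R + iS)/ℏ)` and `w_ν = iℏ∂_ν ln φ + eA_ν = (eA_ν - ∂_νS) + i∂_νR`, so that
`iℏD_νφ = φ w_ν` and `m₀V^μ = g^{μμ} w_μ`. By the Leibniz rule for `iℏD_ν`,
`(iℏD_μ)(iℏD^μ)φ = φ Σ g^{νν}(w_ν² + iℏ∂_νw_ν)`, so the Klein–Gordon equation makes this sum equal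
to `m₀²c²`; its real part is `Σ g^{νν}((Re w_ν)² - (∂_νR)² - ℏ∂_ν∂_νR) = m₀²c²`.
On the other hand `V*_μV^μ = Σ g^{νν}|w_ν|²/m₀²`, and `|φ|² = exp(2R/ℏ)` gives
`∂_μ∂^μ|φ|²/|φ|² = Σ g^{νν}(4(∂_νR)²/ℏ² + 2∂_ν∂_νR/ℏ)`; subtracting the two identities
yields the second claim. The first is immediate, since `φ*·m₀²c²φ` is real.
-/

open Complex

/-- Partial derivative `∂_μ f` of a complex-valued function on `ℝ⁴`. -/
noncomputable def pdC (i : Fin 4) (f : (Fin 4 → ℝ) → ℂ) (x : Fin 4 → ℝ) : ℂ :=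
  fderiv ℝ f x (Pi.single i 1)

/-- Partial derivative `∂_μ f` of a real-valued function on `ℝ⁴`. -/
noncomputable def pdR (i : Fin 4) (f : (Fin 4 → ℝ) → ℝ) (x : Fin 4 → ℝ) : ℝ :=
  fderiv ℝ f x (Pi.single i 1)

/-- Metric signs of `g = diag(+1,−1,−1,−1)`. -/
def mink (i : Fin 4) : ℝ := if i = 0 then 1 else -1

/-- The d'Alembertian `∂_μ∂^μ f` of a real-valued function. -/
noncomputable def dAlembert (f : (Fin 4 → ℝ) → ℝ) (x : Fin 4 → ℝ) : ℝ :=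
  ∑ μ : Fin 4, mink μ * pdR μ (pdR μ f) x

/-- `φ = exp(R/ℏ + iS/ℏ)`. -/
noncomputable def phiOf (hbar : ℝ) (R S : (Fin 4 → ℝ) → ℝ) (x : Fin 4 → ℝ) : ℂ :=
  Complex.exp ((R x + Complex.I * S x) / hbar)

/-- Complex velocity `V^μ = (1/m₀)[iℏ ∂^μ ln φ + e A^μ]` for `φ = exp(R/ℏ + iS/ℏ)`. -/
noncomputable def Vel (m0 hbar e : ℝ) (R S : (Fin 4 → ℝ) → ℝ)
    (A : Fin 4 → (Fin 4 → ℝ) → ℝ) (μ : Fin 4) (x : Fin 4 → ℝ) : ℂ :=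
  (1 / m0) * (Complex.I * hbar *
      ((mink μ : ℂ) * pdC μ (fun y => ((R y : ℂ) + Complex.I * S y) / hbar) x)
    + e * A μ x)

/-- `iℏD_ν ψ = (iℏ∂_ν + eA_ν)ψ`, with `A_ν = g_{νρ}A^ρ`. -/
noncomputable def opLow (hbar e : ℝ) (A : Fin 4 → (Fin 4 → ℝ) → ℝ) (ν : Fin 4)
    (ψ : (Fin 4 → ℝ) → ℂ) (x : Fin 4 → ℝ) : ℂ :=
  Complex.I * hbar * pdC ν ψ x + e * ((mink ν * A ν x : ℝ) : ℂ) * ψ x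

/-- `(iℏD_μ)(iℏD^μ)ψ`. -/
noncomputable def KGop (hbar e : ℝ) (A : Fin 4 → (Fin 4 → ℝ) → ℝ)
    (ψ : (Fin 4 → ℝ) → ℂ) (x : Fin 4 → ℝ) : ℂ :=
  ∑ ν : Fin 4, (mink ν : ℂ) * opLow hbar e A ν (fun y => opLow hbar e A ν ψ y) x


lemma mink_mul_self (μ : Fin 4) : mink μ * mink μ = 1 := by
  unfold mink
  split_ifs <;> norm_num

lemma pdR_const_mul (i : Fin 4) (c : ℝ) (f : (Fin 4 → ℝ) → ℝ) :
    pdR i (fun y => c * f y) = fun y => c * pdR i f y := by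
  funext y
  simp [pdR, show (fun y => c * f y) = c • f from rfl, fderiv_const_smul_field]

lemma pdC_const_mul (i : Fin 4) (c : ℂ) (f : (Fin 4 → ℝ) → ℂ) :
    pdC i (fun y => c * f y) = fun y => c * pdC i f y := by
  funext y
  simp [pdC, show (fun y => c * f y) = c • f from rfl, fderiv_const_smul_field]

lemma pdR_mul {u v : (Fin 4 → ℝ) → ℝ} {x : Fin 4 → ℝ} (i : Fin 4)
    (hu : DifferentiableAt ℝ u x) (hv : DifferentiableAt ℝ v x) :
    pdR i (fun y => u y * v y) x = pdR i u x * v x + u x * pdR i v x := by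
  simp only [pdR, fderiv_fun_mul hu hv, add_apply, smul_apply, smul_eq_mul]
  ring

lemma pdC_mul {u v : (Fin 4 → ℝ) → ℂ} {x : Fin 4 → ℝ} (i : Fin 4)
    (hu : DifferentiableAt ℝ u x) (hv : DifferentiableAt ℝ v x) :
    pdC i (fun y => u y * v y) x = pdC i u x * v x + u x * pdC i v x := by
  simp only [pdC, fderiv_fun_mul hu hv, add_apply, smul_apply, smul_eq_mul]
  ring

lemma pdR_exp {f : (Fin 4 → ℝ) → ℝ} (i : Fin 4) (hf : Differentiable ℝ f) :
    pdR i (fun y => Real.exp (f y)) = fun y => Real.exp (f y) * pdR i f y := by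
  funext y
  simp [pdR, fderiv_exp (hf y)]

lemma pdC_cexp {g : (Fin 4 → ℝ) → ℂ} {x : Fin 4 → ℝ} (i : Fin 4)
    (hg : DifferentiableAt ℝ g x) :
    pdC i (fun y => Complex.exp (g y)) x = Complex.exp (g x) * pdC i g x := by
  simp [pdC, hg.hasFDerivAt.cexp.fderiv]

lemma pdC_ofReal_add_I_mul {u v : (Fin 4 → ℝ) → ℝ} {x : Fin 4 → ℝ} (i : Fin 4)
    (hu : DifferentiableAt ℝ u x) (hv : DifferentiableAt ℝ v x) :
    pdC i (fun y => (u y : ℂ) + I * v y) x = pdR i u x + I * pdR i v x := by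
  have hu' := ofRealCLM.hasFDerivAt.comp x hu.hasFDerivAt
  have hv' := (ofRealCLM.hasFDerivAt.comp x hv.hasFDerivAt).const_mul I
  rw [pdC, HasFDerivAt.fderiv (f := fun y => (u y : ℂ) + I * v y) (hu'.add hv')]
  simp [pdR]

lemma pdC_ofReal_add_I_mul_div {u v : (Fin 4 → ℝ) → ℝ} {x : Fin 4 → ℝ} (i : Fin 4) (c : ℂ)
    (hu : DifferentiableAt ℝ u x) (hv : DifferentiableAt ℝ v x) :
    pdC i (fun y => ((u y : ℂ) + I * v y) / c) x = (pdR i u x + I * pdR i v x) / c := by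
  simp only [div_eq_inv_mul, pdC_const_mul, pdC_ofReal_add_I_mul i hu hv]

lemma ContDiff.differentiable_pdR {n : WithTop ℕ∞} {f : (Fin 4 → ℝ) → ℝ}
    (hf : ContDiff ℝ n f) (hn : 2 ≤ n) (i : Fin 4) : Differentiable ℝ (pdR i f) :=
  (((ContinuousLinearMap.apply ℝ ℝ (Pi.single i 1)).contDiff.comp
    (hf.fderiv_right (m := 1) hn)).differentiable one_ne_zero :)

lemma dAlembert_exp {f : (Fin 4 → ℝ) → ℝ} (hf : ContDiff ℝ 2 f) (x : Fin 4 → ℝ) :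
    dAlembert (fun y => Real.exp (f y)) x
      = Real.exp (f x) * ∑ μ : Fin 4, mink μ * (pdR μ f x ^ 2 + pdR μ (pdR μ f) x) := by
  have hf1 : Differentiable ℝ f := hf.differentiable (by norm_num)
  rw [dAlembert, Finset.mul_sum]
  refine Finset.sum_congr rfl fun μ _ => ?_
  rw [pdR_exp μ hf1, pdR_mul μ (hf1 x).exp (hf.differentiable_pdR le_rfl μ x), pdR_exp μ hf1]
  ring

/-- `m₀V_ν = iℏ∂_ν ln φ + eA_ν` for `φ = exp((R + iS)/ℏ)`, split into real and imaginary parts. -/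
noncomputable def kinMomentum (e : ℝ) (R S : (Fin 4 → ℝ) → ℝ)
    (A : Fin 4 → (Fin 4 → ℝ) → ℝ) (ν : Fin 4) (y : Fin 4 → ℝ) : ℂ :=
  ((e * (mink ν * A ν y) - pdR ν S y : ℝ) : ℂ) + I * (pdR ν R y : ℝ)

lemma kinMomentum_im (e : ℝ) (R S : (Fin 4 → ℝ) → ℝ) (A : Fin 4 → (Fin 4 → ℝ) → ℝ)
    (ν : Fin 4) (y : Fin 4 → ℝ) : (kinMomentum e R S A ν y).im = pdR ν R y := by
  simp [kinMomentum]

lemma opLow_mul (hbar e : ℝ) (A : Fin 4 → (Fin 4 → ℝ) → ℝ) (ν : Fin 4)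
    {ψ f : (Fin 4 → ℝ) → ℂ} {x : Fin 4 → ℝ}
    (hψ : DifferentiableAt ℝ ψ x) (hf : DifferentiableAt ℝ f x) :
    opLow hbar e A ν (fun y => ψ y * f y) x
      = opLow hbar e A ν ψ x * f x + I * hbar * ψ x * pdC ν f x := by
  simp only [opLow, pdC_mul ν hψ hf]
  ring

section Phi

variable {hbar : ℝ} {R S : (Fin 4 → ℝ) → ℝ}

lemma phiOf_ne_zero (y : Fin 4 → ℝ) : phiOf hbar R S y ≠ 0 :=
  Complex.exp_ne_zero _

lemma normSq_phiOf (y : Fin 4 → ℝ) :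
    normSq (phiOf hbar R S y) = Real.exp (2 / hbar * R y) := by
  rw [normSq_eq_norm_sq, phiOf, norm_exp, ← Real.exp_nat_mul]
  congr 1
  simp [div_ofReal_re]
  ring

lemma pdC_phiOf {x : Fin 4 → ℝ} (i : Fin 4)
    (hR : DifferentiableAt ℝ R x) (hS : DifferentiableAt ℝ S x) :
    pdC i (phiOf hbar R S) x = phiOf hbar R S x * ((pdR i R x + I * pdR i S x) / hbar) :=
  (pdC_cexp i (by fun_prop)).trans
    (congrArg _ (pdC_ofReal_add_I_mul_div i _ hR hS))

lemma differentiable_phiOf (hR : Differentiable ℝ R) (hS : Differentiable ℝ S) :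
    Differentiable ℝ (phiOf hbar R S) := by
  unfold phiOf
  fun_prop

lemma opLow_phiOf (hhbar : hbar ≠ 0) (e : ℝ) (A : Fin 4 → (Fin 4 → ℝ) → ℝ) (ν : Fin 4)
    {x : Fin 4 → ℝ} (hR : DifferentiableAt ℝ R x) (hS : DifferentiableAt ℝ S x) :
    opLow hbar e A ν (phiOf hbar R S) x = phiOf hbar R S x * kinMomentum e R S A ν x := by
  have : (hbar : ℂ) ≠ 0 := ofReal_ne_zero.mpr hhbar
  rw [opLow, pdC_phiOf ν hR hS, kinMomentum]
  push_cast
  field_simp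
  linear_combination (phiOf hbar R S x * (pdR ν S x : ℂ)) * I_sq

lemma Vel_eq_kinMomentum (m0 e : ℝ) (hhbar : hbar ≠ 0) (A : Fin 4 → (Fin 4 → ℝ) → ℝ) (μ : Fin 4)
    {x : Fin 4 → ℝ} (hR : DifferentiableAt ℝ R x) (hS : DifferentiableAt ℝ S x) :
    Vel m0 hbar e R S A μ x = (mink μ / m0 : ℝ) * kinMomentum e R S A μ x := by
  have : (hbar : ℂ) ≠ 0 := ofReal_ne_zero.mpr hhbar
  have hη : (mink μ : ℂ) * mink μ = 1 := by exact_mod_cast mink_mul_self μ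
  rw [Vel, pdC_ofReal_add_I_mul_div μ _ hR hS, kinMomentum]
  push_cast
  field_simp
  linear_combination (mink μ * pdR μ S x / m0 : ℂ) * I_sq - (e * A μ x / m0 : ℂ) * hη

lemma ofReal_mink_mul_conj_Vel_mul_Vel (m0 e : ℝ) (hhbar : hbar ≠ 0)
    (A : Fin 4 → (Fin 4 → ℝ) → ℝ) (μ : Fin 4) {x : Fin 4 → ℝ}
    (hR : DifferentiableAt ℝ R x) (hS : DifferentiableAt ℝ S x) :
    (mink μ : ℂ) * (starRingEnd ℂ) (Vel m0 hbar e R S A μ x) * Vel m0 hbar e R S A μ x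
      = ((mink μ * normSq (kinMomentum e R S A μ x) / m0 ^ 2 : ℝ) : ℂ) := by
  rw [mul_assoc, ← normSq_eq_conj_mul_self, Vel_eq_kinMomentum m0 e hhbar A μ hR hS, normSq_mul,
    normSq_ofReal]
  push_cast
  linear_combination (mink μ * normSq (kinMomentum e R S A μ x) / m0 ^ 2 : ℂ)
    * (by exact_mod_cast mink_mul_self μ : (mink μ : ℂ) * mink μ = 1)

lemma dAlembert_normSq_phiOf (hR : ContDiff ℝ 2 R) (x : Fin 4 → ℝ) :
    dAlembert (fun y => normSq (phiOf hbar R S y)) x = normSq (phiOf hbar R S x)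
      * ∑ μ : Fin 4, mink μ * ((2 / hbar * pdR μ R x) ^ 2 + 2 / hbar * pdR μ (pdR μ R) x) := by
  simp only [normSq_phiOf]
  rw [dAlembert_exp (contDiff_const.mul hR)]
  simp only [pdR_const_mul]

end Phi

section KleinGordon

variable {hbar e : ℝ} {R S : (Fin 4 → ℝ) → ℝ} {A : Fin 4 → (Fin 4 → ℝ) → ℝ}

lemma differentiable_kinMomentum (hR : ContDiff ℝ 2 R) (hS : ContDiff ℝ 2 S) (ν : Fin 4)
    (hA : Differentiable ℝ (A ν)) : Differentiable ℝ (kinMomentum e R S A ν) := by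
  have hR' := hR.differentiable_pdR le_rfl ν
  have hS' := hS.differentiable_pdR le_rfl ν
  unfold kinMomentum
  fun_prop

lemma pdC_kinMomentum (hR : ContDiff ℝ 2 R) (hS : ContDiff ℝ 2 S) (ν : Fin 4)
    (hA : Differentiable ℝ (A ν)) (x : Fin 4 → ℝ) :
    pdC ν (kinMomentum e R S A ν) x
      = pdR ν (fun y => e * (mink ν * A ν y) - pdR ν S y) x + I * pdR ν (pdR ν R) x :=
  pdC_ofReal_add_I_mul ν (by have := hS.differentiable_pdR le_rfl ν; fun_prop)
    (hR.differentiable_pdR le_rfl ν x)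

lemma KGop_phiOf (hhbar : hbar ≠ 0) (hR : ContDiff ℝ 2 R) (hS : ContDiff ℝ 2 S)
    (hA : ∀ ν, Differentiable ℝ (A ν)) (x : Fin 4 → ℝ) :
    KGop hbar e A (phiOf hbar R S) x = phiOf hbar R S x * ∑ ν : Fin 4, mink ν *
      (kinMomentum e R S A ν x ^ 2 + I * hbar * pdC ν (kinMomentum e R S A ν) x) := by
  have hR1 : Differentiable ℝ R := hR.differentiable (by norm_num)
  have hS1 : Differentiable ℝ S := hS.differentiable (by norm_num)
  rw [KGop, Finset.mul_sum]
  refine Finset.sum_congr rfl fun ν _ => ?_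
  have hop : opLow hbar e A ν (phiOf hbar R S)
      = fun y => phiOf hbar R S y * kinMomentum e R S A ν y :=
    funext fun y => opLow_phiOf hhbar e A ν (hR1 y) (hS1 y)
  rw [hop, opLow_mul hbar e A ν (differentiable_phiOf hR1 hS1 x)
    (differentiable_kinMomentum hR hS ν (hA ν) x), opLow_phiOf hhbar e A ν (hR1 x) (hS1 x)]
  ring

lemma re_sum_of_KGop_phiOf_eq (hhbar : hbar ≠ 0) (hR : ContDiff ℝ 2 R) (hS : ContDiff ℝ 2 S)
    (hA : ∀ ν, Differentiable ℝ (A ν)) {k : ℝ} {x : Fin 4 → ℝ}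
    (hKG : KGop hbar e A (phiOf hbar R S) x = k * phiOf hbar R S x) :
    ∑ ν : Fin 4, mink ν * ((kinMomentum e R S A ν x).re ^ 2 - (kinMomentum e R S A ν x).im ^ 2
      - hbar * pdR ν (pdR ν R) x) = k := by
  rw [KGop_phiOf hhbar hR hS hA, mul_comm (k : ℂ)] at hKG
  have hsum := congrArg re (mul_left_cancel₀ (phiOf_ne_zero x) hKG)
  rw [re_sum, ofReal_re] at hsum
  rw [← hsum]
  refine Finset.sum_congr rfl fun ν _ => ?_
  rw [re_ofReal_mul, pdC_kinMomentum hR hS ν (hA ν)]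
  congr 1
  simp only [sq, add_re, mul_re, I_re, ofReal_re, zero_mul, I_im, ofReal_im, mul_zero, sub_self,
    add_zero, mul_im, one_mul, zero_add, add_im, zero_sub]
  ring

end KleinGordon

lemma re_conj_mul_ofReal_mul_div_normSq (k : ℝ) {z : ℂ} (hz : z ≠ 0) :
    ((starRingEnd ℂ) z * (k * z)).re / normSq z = k := by
  rw [mul_left_comm, ← normSq_eq_conj_mul_self, ← ofReal_mul, ofReal_re,
    mul_div_cancel_right₀ _ (normSq_pos.mpr hz).ne']

theorem stmt_16_general (m0 hbar e c : ℝ) (hm0 : 0 < m0) (hhbar : 0 < hbar)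
    (R S : (Fin 4 → ℝ) → ℝ) (hR : ContDiff ℝ 2 R) (hS : ContDiff ℝ 2 S)
    (A : Fin 4 → (Fin 4 → ℝ) → ℝ) (hA : ∀ μ, ContDiff ℝ 2 (A μ))
    (hKG : ∀ x, KGop hbar e A (phiOf hbar R S) x
      = (m0 ^ 2 * c ^ 2 : ℝ) * phiOf hbar R S x) :
    ∀ x : Fin 4 → ℝ,
      (((starRingEnd ℂ) (phiOf hbar R S x) * KGop hbar e A (phiOf hbar R S) x).re
          / Complex.normSq (phiOf hbar R S x) = c ^ 2 * m0 ^ 2) ∧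
      ((∑ μ : Fin 4, (mink μ : ℂ) *
          (starRingEnd ℂ) (Vel m0 hbar e R S A μ x) * Vel m0 hbar e R S A μ x)
          - (c ^ 2 : ℂ)
        = (((hbar ^ 2 / (2 * m0 ^ 2)) *
            dAlembert (fun y => Complex.normSq (phiOf hbar R S y)) x
            / Complex.normSq (phiOf hbar R S x) : ℝ) : ℂ)) := by
  intro x
  have hR1 : Differentiable ℝ R := hR.differentiable (by norm_num)
  have hS1 : Differentiable ℝ S := hS.differentiable (by norm_num)
  have hA1 : ∀ μ, Differentiable ℝ (A μ) := fun μ => (hA μ).differentiable (by norm_num)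
  refine ⟨by rw [hKG x, re_conj_mul_ofReal_mul_div_normSq _ (phiOf_ne_zero x), mul_comm], ?_⟩
  have hKGre := re_sum_of_KGop_phiOf_eq hhbar.ne' hR hS hA1 (hKG x)
  rw [Finset.sum_congr rfl fun μ _ =>
      ofReal_mink_mul_conj_Vel_mul_Vel m0 e hhbar.ne' A μ (hR1 x) (hS1 x),
    ← ofReal_sum, ← ofReal_pow, ← ofReal_sub, ofReal_inj, dAlembert_normSq_phiOf hR,
    mul_div_assoc, mul_div_cancel_left₀ _ (normSq_pos.mpr (phiOf_ne_zero x)).ne']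
  rw [← mul_div_cancel_left₀ (c ^ 2) (pow_ne_zero 2 hm0.ne'), ← hKGre, Finset.sum_div,
    ← Finset.sum_sub_distrib, Finset.mul_sum]
  refine Finset.sum_congr rfl fun μ _ => ?_
  rw [normSq_apply, ← sq, ← sq, kinMomentum_im]
  field_simp
  ring

/-- If `φ` solves the Klein–Gordon equation `(iℏD_α)(iℏD^α)φ = m₀²c²φ`, then
`Re{φ*(iℏD_μ)(iℏD^μ)φ}/(φ*φ) = c²m₀²`, and hence
`V*_μV^μ − c² = (ℏ²/2m₀²)∂_μ∂^μ(φφ*)/(φ*φ)`. -/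
theorem stmt_16 (m0 hbar e c : ℝ) (hm0 : 0 < m0) (hhbar : 0 < hbar) (he : 0 < e)
    (hc : 0 < c)
    (R S : (Fin 4 → ℝ) → ℝ) (hR : ContDiff ℝ 2 R) (hS : ContDiff ℝ 2 S)
    (A : Fin 4 → (Fin 4 → ℝ) → ℝ) (hA : ∀ μ, ContDiff ℝ 2 (A μ))
    (hKG : ∀ x, KGop hbar e A (phiOf hbar R S) x
      = (m0 ^ 2 * c ^ 2 : ℝ) * phiOf hbar R S x) :
    ∀ x : Fin 4 → ℝ,
      (((starRingEnd ℂ) (phiOf hbar R S x) * KGop hbar e A (phiOf hbar R S) x).re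
          / Complex.normSq (phiOf hbar R S x) = c ^ 2 * m0 ^ 2) ∧
      ((∑ μ : Fin 4, (mink μ : ℂ) *
          (starRingEnd ℂ) (Vel m0 hbar e R S A μ x) * Vel m0 hbar e R S A μ x)
          - (c ^ 2 : ℂ)
        = (((hbar ^ 2 / (2 * m0 ^ 2)) *
            dAlembert (fun y => Complex.normSq (phiOf hbar R S y)) x
            / Complex.normSq (phiOf hbar R S x) : ℝ) : ℂ)) :=
  stmt_16_general m0 hbar e c hm0 hhbar R S hR hS A hA hKG
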